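/- arXiv:1901.03113 — 2 statements merged into one kernel-verified Lean document; each statement's English description precedes it below -/
import Mathlib

section
/- Let E ⊂ LC(ℝ^(2N), ℝ^N) admit L¹_loc-equicontinuous m-bounds, i.e. for each j ∈ ℕ the family of optimal m-bounds on B_j of the functions in E is L¹_loc-equicontinuous. Then for each j ∈ ℕ and compact interval I = [q₁,q₂] with rational endpoints, the function θ_j^I(s) = sup_{t ∈ I, f ∈ E} ∫_t^{t+s} m_f^j(u) du is a nondecreasing continuous function on ℝ⁺ with θ_j^I(0) = 0; that is, the family {θ_j^I} is a suitable set of moduli of continuity. -/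
open MeasureTheory Set Metric

private lemma chop (g : ℝ → ℝ) (hg : ∀ a b : ℝ, IntervalIntegrable g MeasureTheory.volume a b)
    (δ C lo hi : ℝ) (hδ : 0 < δ)
    (hsmall : ∀ a b : ℝ, lo ≤ a → a ≤ b → b ≤ hi → b - a < δ → ∫ u in a..b, g u < C) :
    ∀ n : ℕ, ∀ a b : ℝ, lo ≤ a → a ≤ b → b ≤ hi → b - a ≤ n * (δ/2) →
      ∫ u in a..b, g u ≤ n * C := by
  intro n
  induction n with
  | zero =>
    intro a b h1 h2 h3 h4
    have hab : a = b := le_antisymm h2 (by linarith [h4] : b ≤ a)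
    simp [hab]
  | succ n ih =>
    intro a b h1 h2 h3 h4
    set c := max a (b - δ/2) with hc
    have hac : a ≤ c := le_max_left _ _
    have hcb : c ≤ b := max_le h2 (by linarith)
    have h5 : b - c < δ := by
      have : b - δ/2 ≤ c := le_max_right _ _
      linarith
    have h6 : c - a ≤ n * (δ/2) := by
      rcases max_cases a (b - δ/2) with ⟨h, _⟩ | ⟨h, _⟩
      · rw [hc, h]; simp; positivity
      · rw [hc, h]; push_cast at h4; linarith
    have split : ∫ u in a..b, g u = (∫ u in a..c, g u) + ∫ u in c..b, g u :=
      (intervalIntegral.integral_add_adjacent_intervals (hg a c) (hg c b)).symm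
    have h7 := hsmall c b (h1.trans hac) hcb h3 h5
    have h8 := ih a c h1 hac (hcb.trans h3) h6
    push_cast
    linarith

/-- If `E ⊆ LC(ℝ^{2N}, ℝ^N)` admits `L¹_loc`-equicontinuous optimal m-bounds `M f` on `B_j`,
then `θ_j^I(s) = sup_{t ∈ I, f ∈ E} ∫_t^{t+s} M f` is a nondecreasing continuous function on
`ℝ⁺` vanishing at `0`, i.e. a modulus of continuity. -/
theorem stmt6 (N j : ℕ) (q₁ q₂ : ℚ) (hq : (q₁:ℝ) ≤ (q₂:ℝ))
    (E : Set (ℝ → (EuclideanSpace ℝ (Fin N)) × (EuclideanSpace ℝ (Fin N)) →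
      EuclideanSpace ℝ (Fin N)))
    (M : (ℝ → (EuclideanSpace ℝ (Fin N)) × (EuclideanSpace ℝ (Fin N)) →
      EuclideanSpace ℝ (Fin N)) → ℝ → ℝ)
    (hpos : ∀ f ∈ E, ∀ t : ℝ, 0 ≤ M f t)
    (hloc : ∀ f ∈ E, LocallyIntegrable (M f))
    (hopt : ∀ f ∈ E, ∀ t : ℝ, IsLUB
      {r : ℝ | ∃ z ∈ closedBall (0 : (EuclideanSpace ℝ (Fin N)) × (EuclideanSpace ℝ (Fin N)))
        (j:ℝ), r = ‖f t z‖} (M f t))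
    (hequi : ∀ r > (0:ℝ), ∀ ε > (0:ℝ), ∃ δ > (0:ℝ), ∀ f ∈ E, ∀ s t : ℝ,
      -r ≤ s → s ≤ t → t ≤ r → t - s < δ → ∫ u in s..t, M f u < ε) :
    ∀ θ : ℝ → ℝ,
      (∀ s : ℝ, θ s = sSup {y : ℝ | ∃ t ∈ Icc (q₁:ℝ) (q₂:ℝ), ∃ f ∈ E,
        y = ∫ u in t..(t+s), M f u}) →
      MonotoneOn θ (Ici 0) ∧ ContinuousOn θ (Ici 0) ∧ θ 0 = 0 := by
  intro θ hθ
  by_cases hE : ∃ f, f ∈ E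
  swap
  · push_neg at hE
    have hz : ∀ s, θ s = 0 := by
      intro s
      rw [hθ]
      have : {y : ℝ | ∃ t ∈ Icc (q₁:ℝ) (q₂:ℝ), ∃ f ∈ E,
          y = ∫ u in t..(t+s), M f u} = (∅ : Set ℝ) := by
        ext y
        simp only [Set.mem_setOf_eq, Set.mem_empty_iff_false, iff_false, not_exists]
        rintro t ⟨_, f, hf, _⟩
        exact hE f hf
      rw [this, Real.sSup_empty]
    have hθ0 : θ = fun _ => 0 := funext hz
    rw [hθ0]
    exact ⟨fun _ _ _ _ _ => le_rfl, continuousOn_const, rfl⟩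
  · obtain ⟨f₀, hf₀⟩ := hE
    have hInt : ∀ f ∈ E, ∀ a b : ℝ, IntervalIntegrable (M f) volume a b :=
      fun f hf a b => intervalIntegrable_iff.mpr
        (((hloc f hf).integrableOn_isCompact isCompact_uIcc).mono_set Set.uIoc_subset_uIcc)
    have hbdd : ∀ s : ℝ, 0 ≤ s → BddAbove {y : ℝ | ∃ t ∈ Icc (q₁:ℝ) (q₂:ℝ), ∃ f ∈ E,
        y = ∫ u in t..(t+s), M f u} := by
      intro s hs
      set r := |(q₁:ℝ)| + |(q₂:ℝ)| + s + 1 with hr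
      have hr0 : 0 < r := by positivity
      obtain ⟨δ, hδ, hδ'⟩ := hequi r hr0 1 one_pos
      refine ⟨(⌈s / (δ/2)⌉₊ : ℝ) * 1, ?_⟩
      rintro y ⟨t, ht, f, hf, rfl⟩
      have hlen : (t + s) - t ≤ (⌈s / (δ/2)⌉₊ : ℝ) * (δ/2) := by
        have h1 : s / (δ/2) ≤ (⌈s / (δ/2)⌉₊ : ℝ) := Nat.le_ceil _
        have h2 : s ≤ (⌈s / (δ/2)⌉₊ : ℝ) * (δ/2) := by
          rw [← div_le_iff₀ (by positivity : (0:ℝ) < δ/2)]; exact h1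
        linarith
      refine chop (M f) (hInt f hf) δ 1 (-r) r hδ (fun a b h1 h2 h3 h4 => hδ' f hf a b h1 h2 h3 h4)
        ⌈s / (δ/2)⌉₊ t (t + s) ?_ (by linarith) ?_ hlen
      · have := neg_abs_le (q₁:ℝ)
        have := abs_nonneg (q₂:ℝ)
        have := ht.1
        simp only [hr]; linarith
      · have := le_abs_self (q₂:ℝ)
        have := abs_nonneg (q₁:ℝ)
        have := ht.2
        simp only [hr]; linarith
    have hnn : ∀ s : ℝ, 0 ≤ s → 0 ≤ θ s := by
      intro s hs
      rw [hθ]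
      have hmem : (∫ u in (q₁:ℝ)..((q₁:ℝ)+s), M f₀ u) ∈ {y : ℝ | ∃ t ∈ Icc (q₁:ℝ) (q₂:ℝ),
          ∃ f ∈ E, y = ∫ u in t..(t+s), M f u} := ⟨q₁, ⟨le_rfl, hq⟩, f₀, hf₀, rfl⟩
      have h0 : 0 ≤ ∫ u in (q₁:ℝ)..((q₁:ℝ)+s), M f₀ u :=
        intervalIntegral.integral_nonneg (by linarith) (fun u _ => hpos f₀ hf₀ u)
      exact h0.trans (le_csSup (hbdd s hs) hmem)
    have hmono : ∀ u v : ℝ, 0 ≤ u → u ≤ v → θ u ≤ θ v := by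
      intro u v hu huv
      have hv : 0 ≤ v := hu.trans huv
      rw [hθ u]
      apply Real.sSup_le
      · rintro y ⟨t, ht, f, hf, rfl⟩
        have hsplit := intervalIntegral.integral_add_adjacent_intervals
          (hInt f hf t (t+u)) (hInt f hf (t+u) (t+v))
        have h2 : 0 ≤ ∫ x in (t+u)..(t+v), M f x :=
          intervalIntegral.integral_nonneg (by linarith) (fun x _ => hpos f hf x)
        have h3 : (∫ x in t..(t+v), M f x) ≤ θ v := by
          rw [hθ v]; exact le_csSup (hbdd v hv) ⟨t, ht, f, hf, rfl⟩
        linarith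
      · exact hnn v hv
    have hkey : ∀ u v ε : ℝ, 0 ≤ u → u ≤ v → 0 < ε →
        (∀ f ∈ E, ∀ t ∈ Icc (q₁:ℝ) (q₂:ℝ), ∫ x in (t+u)..(t+v), M f x < ε) →
        θ v ≤ θ u + ε := by
      intro u v ε hu huv hε hsmall
      rw [hθ v]
      apply Real.sSup_le
      · rintro y ⟨t, ht, f, hf, rfl⟩
        have hsplit := intervalIntegral.integral_add_adjacent_intervals
          (hInt f hf t (t+u)) (hInt f hf (t+u) (t+v))
        have h1 : (∫ x in t..(t+u), M f x) ≤ θ u := by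
          rw [hθ u]; exact le_csSup (hbdd u hu) ⟨t, ht, f, hf, rfl⟩
        have h2 := hsmall f hf t ht
        linarith
      · linarith [hnn u hu]
    refine ⟨fun u hu v _ huv => hmono u v hu huv, ?_, ?_⟩
    · intro a ha
      have ha0 : (0:ℝ) ≤ a := ha
      rw [Metric.continuousWithinAt_iff]
      intro ε hε
      set r := |(q₁:ℝ)| + |(q₂:ℝ)| + a + 2 with hr
      have hr0 : 0 < r := by positivity
      obtain ⟨δ₀, hδ₀, hδ'⟩ := hequi r hr0 (ε/2) (by linarith)
      refine ⟨min δ₀ 1, by positivity, ?_⟩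
      intro x hx hdist
      have hx0 : (0:ℝ) ≤ x := hx
      rw [Real.dist_eq] at hdist
      have hc : ∀ u v : ℝ, 0 ≤ u → u ≤ v → v - u < min δ₀ 1 → v ≤ a + 1 →
          θ v ≤ θ u + ε/2 := by
        intro u v hu huv hvu hva
        refine hkey u v (ε/2) hu huv (by linarith) ?_
        intro f hf t ht
        refine hδ' f hf (t+u) (t+v) ?_ (by linarith) ?_
          (by have := min_le_left δ₀ 1; linarith)
        · have := neg_abs_le (q₁:ℝ)
          have := abs_nonneg (q₂:ℝ)
          have := ht.1
          simp only [hr]; linarith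
        · have := le_abs_self (q₂:ℝ)
          have := abs_nonneg (q₁:ℝ)
          have := ht.2
          simp only [hr]; linarith
      rw [Real.dist_eq]
      rcases le_total x a with h | h
      · have h1 : θ x ≤ θ a := hmono x a hx0 h
        have h2 : θ a ≤ θ x + ε/2 := by
          refine hc x a hx0 h ?_ (by linarith)
          rw [abs_sub_comm] at hdist
          calc a - x ≤ |a - x| := le_abs_self _
            _ < min δ₀ 1 := hdist
        rw [abs_of_nonpos (by linarith)]
        linarith
      · have h1 : θ a ≤ θ x := hmono a x ha0 h
        have hxa : x - a < min δ₀ 1 := lt_of_le_of_lt (le_abs_self _) hdist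
        have h2 : θ x ≤ θ a + ε/2 := by
          refine hc a x ha0 h hxa ?_
          have := min_le_right δ₀ 1
          linarith
        rw [abs_of_nonneg (by linarith)]
        linarith
    · rw [hθ]
      have : {y : ℝ | ∃ t ∈ Icc (q₁:ℝ) (q₂:ℝ), ∃ f ∈ E,
          y = ∫ u in t..(t+0), M f u} = {0} := by
        ext y
        simp only [Set.mem_setOf_eq, Set.mem_singleton_iff]
        constructor
        · rintro ⟨t, ht, f, hf, rfl⟩
          simp [intervalIntegral.integral_same]
        · rintro rfl
          exact ⟨q₁, ⟨le_rfl, hq⟩, f₀, hf₀, by simp⟩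
      rw [this, csSup_singleton]
end

section
/- Let μ_n be a sequence of positive measures on ℝ absolutely continuous with densities m_n ∈ L¹_loc, converging vaguely to a positive Radon measure μ, and let f_n, f : ℝ × ℝ^M → ℝ^N be strong Carathéodory functions with |f_n(t,x)| ≤ m_n(t) for a.e. t and all x ∈ B_j, such that ∫_t^{t+h} f_n(s,x) ds → ∫_t^{t+h} f(s,x) ds for all rational t, h > 0 and x in a countable dense set D ∩ B_j. Then for every x ∈ D ∩ B_j and all real t and h > 0: |(1/h) ∫_t^{t+h} f(s,x) ds| ≤ μ([t, t+h])/h. -/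
/-!
For rational endpoints, a continuous compactly supported bump `g` with `0 ≤ g ≤ 1`, equal to `1`
on `[q, r]` and supported in `(a, b)`, gives `‖∫_q^r f_n(·, x)‖ ≤ ∫_q^r m_n ≤ ∫ g dμ_n`; letting
`n → ∞` yields `‖∫_q^r f(·, x)‖ ≤ ∫ g dμ ≤ μ([a, b])`. Since `(u, v) ↦ ∫_u^v f(·, x)` is
continuous, the bound passes to all real `u, v ∈ [a, b]`, and taking `[a, b] = [t - ε, t + h + ε]`
with `ε → 0⁺` gives `μ([t, t + h])` by continuity of `μ` along decreasing compact sets.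
-/

open MeasureTheory Set Metric Filter Topology
open scoped Interval

section

variable {E : Type*} [NormedAddCommGroup E] [NormedSpace ℝ E]

theorem integral_withDensity_ofReal {α : Type*} [MeasurableSpace α] {μ : Measure α} {m : α → ℝ}
    (hm : AEMeasurable m μ) (hm0 : 0 ≤ᵐ[μ] m) (g : α → E) :
    ∫ x, g x ∂μ.withDensity (fun x => ENNReal.ofReal (m x)) = ∫ x, m x • g x ∂μ := by
  rw [integral_withDensity_eq_integral_toReal_smul₀ hm.ennreal_ofReal
    (Eventually.of_forall fun _ => ENNReal.ofReal_lt_top)]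
  exact integral_congr_ae (hm0.mono fun x hx => by simp only [ENNReal.toReal_ofReal hx])

theorem norm_intervalIntegral_le_integral_withDensity {φ : ℝ → E} {m g : ℝ → ℝ} {a b : ℝ}
    (hm : LocallyIntegrable m) (hφm : ∀ᵐ t, ‖φ t‖ ≤ m t) (hg : Continuous g)
    (hgc : HasCompactSupport g) (hg0 : 0 ≤ g) (hg1 : EqOn g 1 (uIcc a b)) :
    ‖∫ t in a..b, φ t‖ ≤ ∫ t, g t ∂volume.withDensity fun t => ENNReal.ofReal (m t) := by
  have hm0 : 0 ≤ᵐ[volume] m := hφm.mono fun t ht => (norm_nonneg _).trans ht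
  calc ‖∫ t in a..b, φ t‖ ≤ ∫ t in Ι a b, ‖φ t‖ :=
        intervalIntegral.norm_integral_le_integral_norm_uIoc
    _ ≤ ∫ t in Ι a b, m t :=
      integral_mono_of_nonneg (Eventually.of_forall fun _ => norm_nonneg _)
        ((hm.integrableOn_isCompact isCompact_uIcc).mono_set uIoc_subset_uIcc)
        (ae_restrict_of_ae hφm)
    _ = ∫ t in Ι a b, m t • g t :=
      setIntegral_congr_fun measurableSet_uIoc fun t ht => by
        simp [hg1 (uIoc_subset_uIcc ht)]
    _ ≤ ∫ t, m t • g t :=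
      setIntegral_le_integral (hm.integrable_smul_right_of_hasCompactSupport hg hgc)
        (hm0.mono fun t ht => smul_nonneg ht (hg0 t))
    _ = _ := (integral_withDensity_ofReal hm.aestronglyMeasurable.aemeasurable hm0 g).symm

theorem norm_intervalIntegral_le_measure_of_tendsto {ι : Type*} {l : Filter ι} [l.NeBot]
    {φn : ι → ℝ → E} {φ : ℝ → E} {mn : ι → ℝ → ℝ} {μ : Measure ℝ} [IsFiniteMeasureOnCompacts μ]
    (hmn : ∀ n, LocallyIntegrable (mn n)) (hbound : ∀ n, ∀ᵐ t, ‖φn n t‖ ≤ mn n t)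
    (hvague : ∀ g : ℝ → ℝ, Continuous g → HasCompactSupport g →
      Tendsto (fun n => ∫ t, g t ∂volume.withDensity fun t => ENNReal.ofReal (mn n t)) l
        (𝓝 (∫ t, g t ∂μ)))
    {q r a b : ℝ} (hconv : Tendsto (fun n => ∫ t in q..r, φn n t) l (𝓝 (∫ t in q..r, φ t)))
    (hqr : uIcc q r ⊆ Ioo a b) :
    ‖∫ t in q..r, φ t‖ ≤ (μ (Icc a b)).toReal := by
  obtain ⟨g, hg1, hg0, hgc, hg01⟩ := exists_continuous_one_zero_of_isCompact isCompact_uIcc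
    isOpen_Ioo.isClosed_compl (disjoint_compl_right_iff_subset.mpr hqr)
  have hφg : ‖∫ t in q..r, φ t‖ ≤ ∫ t, g t ∂μ :=
    le_of_tendsto_of_tendsto' hconv.norm (hvague g g.continuous hgc) fun n =>
      norm_intervalIntegral_le_integral_withDensity (hmn n) (hbound n) g.continuous hgc
        (fun t => (hg01 t).1) hg1
  have hgμ : ENNReal.ofReal (∫ t, g t ∂μ) ≤ μ (Icc a b) :=
    integral_le_measure (fun t _ => (hg01 t).2)
      fun t ht => (hg0 fun h => ht (Ioo_subset_Icc_self h)).le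
  exact hφg.trans ((ENNReal.ofReal_le_iff_le_toReal isCompact_Icc.measure_ne_top).1 hgμ)

theorem tendsto_intervalIntegral_rat {ι : Type*} {l : Filter ι} {φn : ι → ℝ → E} {φ : ℝ → E}
    (hconv : ∀ t h : ℚ, 0 < h → Tendsto (fun n => ∫ s in (t : ℝ)..(t : ℝ) + (h : ℝ), φn n s) l
      (𝓝 (∫ s in (t : ℝ)..(t : ℝ) + (h : ℝ), φ s)))
    (q r : ℚ) :
    Tendsto (fun n => ∫ s in (q : ℝ)..(r : ℝ), φn n s) l (𝓝 (∫ s in (q : ℝ)..(r : ℝ), φ s)) := by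
  have hlt : ∀ q r : ℚ, q < r →
      Tendsto (fun n => ∫ s in (q : ℝ)..(r : ℝ), φn n s) l (𝓝 (∫ s in (q : ℝ)..(r : ℝ), φ s)) :=
    fun q r hqr => by simpa using hconv q (r - q) (sub_pos.2 hqr)
  rcases lt_trichotomy q r with hqr | rfl | hrq
  · exact hlt q r hqr
  · simp only [intervalIntegral.integral_same, tendsto_const_nhds]
  · simpa only [intervalIntegral.integral_symm (r : ℝ)] using (hlt r q hrq).neg

theorem MeasureTheory.LocallyIntegrable.continuous_intervalIntegral {F : ℝ → E}
    (hF : LocallyIntegrable F) :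
    Continuous fun p : ℝ × ℝ => ∫ t in p.1..p.2, F t := by
  have hint : ∀ a b, IntervalIntegrable F volume a b := fun a b =>
    (hF.integrableOn_isCompact isCompact_uIcc).intervalIntegrable
  have hΦ := intervalIntegral.continuous_primitive hint 0
  convert (hΦ.comp continuous_snd).sub (hΦ.comp continuous_fst) using 2 with p
  exact (intervalIntegral.integral_interval_sub_left (hint 0 p.2) (hint 0 p.1)).symm

theorem norm_intervalIntegral_le_of_forall_rat {F : ℝ → E} (hF : LocallyIntegrable F)
    {a b C : ℝ} (hab : a < b)
    (hC : ∀ q r : ℚ, (q : ℝ) ∈ Ioo a b → (r : ℝ) ∈ Ioo a b → ‖∫ t in q..r, F t‖ ≤ C)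
    {u v : ℝ} (hu : u ∈ Icc a b) (hv : v ∈ Icc a b) :
    ‖∫ t in u..v, F t‖ ≤ C := by
  set S := Ioo a b ∩ range ((↑) : ℚ → ℝ)
  have hS : Icc a b ⊆ closure S := by
    rw [← closure_Ioo hab.ne]
    exact closure_minimal (Rat.denseRange_cast.open_subset_closure_inter isOpen_Ioo)
      isClosed_closure
  have hclosed : IsClosed {p : ℝ × ℝ | ‖∫ t in p.1..p.2, F t‖ ≤ C} :=
    isClosed_le hF.continuous_intervalIntegral.norm continuous_const
  have hSS : closure (S ×ˢ S) ⊆ {p : ℝ × ℝ | ‖∫ t in p.1..p.2, F t‖ ≤ C} := by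
    refine hclosed.closure_subset_iff.2 ?_
    rintro ⟨_, _⟩ ⟨⟨hq, q, rfl⟩, hr, r, rfl⟩
    exact hC q r hq hr
  refine hSS (a := (u, v)) ?_
  rw [closure_prod_eq]
  exact ⟨hS hu, hS hv⟩

end

theorem biInter_Icc_sub_add (a b : ℝ) : ⋂ r > 0, Icc (a - r) (b + r) = Icc a b := by
  ext x
  simp only [mem_iInter, mem_Icc]
  refine ⟨fun h => ⟨le_of_forall_pos_le_add fun r hr => ?_,
    le_of_forall_pos_le_add fun r hr => (h r hr).2⟩, fun h r hr => ⟨?_, ?_⟩⟩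
  · linarith [(h r hr).1]
  · linarith [h.1]
  · linarith [h.2]

theorem tendsto_measure_Icc_sub_add (μ : Measure ℝ) [IsFiniteMeasureOnCompacts μ] (a b : ℝ) :
    Tendsto (fun r => μ (Icc (a - r) (b + r))) (𝓝[>] 0) (𝓝 (μ (Icc a b))) := by
  rw [← biInter_Icc_sub_add]
  exact tendsto_measure_biInter_gt (fun r _ => nullMeasurableSet_Icc)
    (fun r s _ hrs => Icc_subset_Icc (by linarith) (by linarith))
    ⟨1, zero_lt_one, isCompact_Icc.measure_ne_top⟩

theorem stmt11_general (M N j : ℕ)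
    (μn : ℕ → Measure ℝ) (mn : ℕ → ℝ → ℝ) (μ : Measure ℝ) [IsLocallyFiniteMeasure μ]
    (hdensity : ∀ n, μn n = volume.withDensity (fun t => ENNReal.ofReal (mn n t)))
    (hmn : ∀ n, LocallyIntegrable (mn n))
    (fn : ℕ → ℝ → EuclideanSpace ℝ (Fin M) → EuclideanSpace ℝ (Fin N))
    (f : ℝ → EuclideanSpace ℝ (Fin M) → EuclideanSpace ℝ (Fin N))
    (hfint : ∀ x, LocallyIntegrable (fun t => f t x))
    (hbound : ∀ n, ∀ᵐ t : ℝ,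
      ∀ x ∈ closedBall (0 : EuclideanSpace ℝ (Fin M)) (j:ℝ), ‖fn n t x‖ ≤ mn n t)
    (D : Set (EuclideanSpace ℝ (Fin M)))
    (hvague : ∀ g : ℝ → ℝ, Continuous g → HasCompactSupport g →
      Tendsto (fun n => ∫ t, g t ∂(μn n)) atTop (nhds (∫ t, g t ∂μ)))
    (hconv : ∀ x ∈ D ∩ closedBall 0 (j:ℝ), ∀ t h : ℚ, 0 < h →
      Tendsto (fun n => ∫ s in (t:ℝ)..((t:ℝ)+(h:ℝ)), fn n s x) atTop
        (nhds (∫ s in (t:ℝ)..((t:ℝ)+(h:ℝ)), f s x))) :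
    ∀ x ∈ D ∩ closedBall 0 (j:ℝ), ∀ t h : ℝ, 0 < h →
      ‖(1/h) • ∫ s in t..(t+h), f s x‖ ≤ (μ (Icc t (t+h))).toReal / h := by
  intro x hx t h hh
  simp only [hdensity] at hvague
  have hbound_x : ∀ n, ∀ᵐ s, ‖fn n s x‖ ≤ mn n s := fun n => (hbound n).mono fun s hs => hs x hx.2
  have hthick : ∀ ε > 0, ‖∫ s in t..(t+h), f s x‖ ≤ (μ (Icc (t - ε) (t + h + ε))).toReal :=
    fun ε hε => norm_intervalIntegral_le_of_forall_rat (hfint x) (by linarith)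
      (fun q r hq hr => norm_intervalIntegral_le_measure_of_tendsto hmn hbound_x hvague
        (tendsto_intervalIntegral_rat (hconv x hx) q r) (ordConnected_Ioo.uIcc_subset hq hr))
      ⟨by linarith, by linarith⟩ ⟨by linarith, by linarith⟩
  have hlim : Tendsto (fun ε => (μ (Icc (t - ε) (t + h + ε))).toReal) (𝓝[>] 0)
      (𝓝 (μ (Icc t (t+h))).toReal) :=
    (ENNReal.tendsto_toReal isCompact_Icc.measure_ne_top).comp (tendsto_measure_Icc_sub_add μ _ _)
  have hnorm : ‖∫ s in t..(t+h), f s x‖ ≤ (μ (Icc t (t+h))).toReal :=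
    ge_of_tendsto hlim (eventually_nhdsWithin_of_forall hthick)
  rw [norm_smul, Real.norm_eq_abs, abs_of_pos (one_div_pos.2 hh), one_div, inv_mul_eq_div]
  exact div_le_div_of_nonneg_right hnorm hh.le

/-- If measures with densities `m_n` dominating `|f_n(·,x)|` on `B_j` converge vaguely to a
Radon measure `μ`, and the integrals of `f_n(·,x)` converge to those of `f(·,x)` over rational
intervals for `x` in a countable dense set, then the averages of `f(·,x)` are dominated by
the averages of `μ`. -/
theorem stmt11 (M N j : ℕ)
    (μn : ℕ → Measure ℝ) (mn : ℕ → ℝ → ℝ) (μ : Measure ℝ) [IsLocallyFiniteMeasure μ]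
    (hdensity : ∀ n, μn n = volume.withDensity (fun t => ENNReal.ofReal (mn n t)))
    (hmn : ∀ n, LocallyIntegrable (mn n)) (hmnpos : ∀ n, ∀ t : ℝ, 0 ≤ mn n t)
    (fn : ℕ → ℝ → EuclideanSpace ℝ (Fin M) → EuclideanSpace ℝ (Fin N))
    (f : ℝ → EuclideanSpace ℝ (Fin M) → EuclideanSpace ℝ (Fin N))
    (hSCn : ∀ n, Measurable (Function.uncurry (fn n)) ∧ ∀ᵐ t : ℝ, Continuous (fn n t))
    (hSC : Measurable (Function.uncurry f) ∧ ∀ᵐ t : ℝ, Continuous (f t))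
    (hfint : ∀ x, LocallyIntegrable (fun t => f t x))
    (hbound : ∀ n, ∀ᵐ t : ℝ,
      ∀ x ∈ closedBall (0 : EuclideanSpace ℝ (Fin M)) (j:ℝ), ‖fn n t x‖ ≤ mn n t)
    (D : Set (EuclideanSpace ℝ (Fin M))) (hD : D.Countable) (hdense : Dense D)
    (hvague : ∀ g : ℝ → ℝ, Continuous g → HasCompactSupport g →
      Tendsto (fun n => ∫ t, g t ∂(μn n)) atTop (nhds (∫ t, g t ∂μ)))
    (hconv : ∀ x ∈ D ∩ closedBall 0 (j:ℝ), ∀ t h : ℚ, 0 < h →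
      Tendsto (fun n => ∫ s in (t:ℝ)..((t:ℝ)+(h:ℝ)), fn n s x) atTop
        (nhds (∫ s in (t:ℝ)..((t:ℝ)+(h:ℝ)), f s x))) :
    ∀ x ∈ D ∩ closedBall 0 (j:ℝ), ∀ t h : ℝ, 0 < h →
      ‖(1/h) • ∫ s in t..(t+h), f s x‖ ≤ (μ (Icc t (t+h))).toReal / h :=
  stmt11_general M N j μn mn μ hdensity hmn fn f hfint hbound D hvague hconv
end
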